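/- The function G_m(x, 1) satisfies the pseudo-periodicity G_m(xq, 1) + x^m G_m(x, 1) + ∑_{k=1}^{m−1} x^k θ_{q^m}(−q^k) = 0. In particular, the k = 0 theta term drops out because θ_{q^m}(−1) = 0. -/

import Mathlib

/-- Jacobi theta function `θ_Q(z) = ∑_{n ∈ ℤ} z^n Q^{n(n-1)/2}`. -/
noncomputable def thetaQ (Q z : ℂ) : ℂ :=
  ∑' n : ℤ, z ^ n * Q ^ (n * (n - 1) / 2)

/-- Level-`m` Appell sum at `y = 1`:
`G_m(x,1) = ∑_{n ∈ ℤ} (-1)^n q^{mn(n+1)/2} / (1 - x q^n)`. -/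
noncomputable def appellG1 (m : ℕ) (q x : ℂ) : ℂ :=
  ∑' n : ℤ, (-1) ^ n * q ^ ((m : ℤ) * n * (n + 1) / 2) / (1 - x * q ^ n)

open Filter Finset

lemma two_dvd_T (n : ℤ) : (2:ℤ) ∣ n * (n - 1) := by
  rcases Int.even_mul_succ_self (n-1) with ⟨t, ht⟩
  exact ⟨t, by linarith⟩

lemma T_spec (n : ℤ) : 2 * (n * (n-1) / 2) = n * (n-1) := Int.mul_ediv_cancel' (two_dvd_T n)

lemma expA (m n : ℤ) : m * n * (n+1) / 2 = m * (n*(n-1)/2) + m*n := by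
  have h := T_spec n
  have h2 : m * n * (n+1) = 2 * (m * (n*(n-1)/2) + m*n) := by linear_combination -m * h
  rw [h2, Int.mul_ediv_cancel_left _ (by norm_num : (2:ℤ) ≠ 0)]

lemma expB (m n : ℤ) : m * (n-1) * ((n-1)+1) / 2 = m * (n*(n-1)/2) := by
  have h := T_spec n
  have h2 : m * (n-1) * ((n-1)+1) = 2 * (m * (n*(n-1)/2)) := by linear_combination -m * h
  rw [h2, Int.mul_ediv_cancel_left _ (by norm_num : (2:ℤ) ≠ 0)]

lemma pow_swap (q : ℂ) (k : ℕ) (n : ℤ) : ((q^k : ℂ))^n = (q^n)^k := by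
  rw [← zpow_natCast q k, ← zpow_mul, mul_comm, zpow_mul, zpow_natCast]

lemma neg_one_zpow_sub_one (n : ℤ) : ((-1:ℂ)) ^ (1 - n) = -((-1:ℂ))^n := by
  have hinv : ((-1:ℂ)^n)⁻¹ = (-1:ℂ)^n := by
    refine inv_eq_of_mul_eq_one_right ?_
    rw [← mul_zpow]; norm_num
  rw [zpow_sub₀ (by norm_num : (-1:ℂ) ≠ 0), zpow_one, div_eq_mul_inv, hinv]
  ring

lemma thetaQ_neg_one (Q : ℂ) : thetaQ Q (-1) = 0 := by
  have key : ∀ n : ℤ, ((-1:ℂ)) ^ (1 - n) * Q ^ ((1-n) * ((1-n) - 1) / 2)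
      = -(((-1:ℂ))^n * Q^(n*(n-1)/2)) := by
    intro n
    have h1 : (1 - n) * ((1 - n) - 1) = n * (n - 1) := by ring
    rw [h1, neg_one_zpow_sub_one]; ring
  have e := (Equiv.subLeft (1:ℤ)).tsum_eq
      (fun n : ℤ => ((-1:ℂ)) ^ n * Q ^ (n * (n - 1) / 2))
  simp only [Equiv.subLeft_apply] at e
  simp only [key, tsum_neg] at e
  have h : thetaQ Q (-1) = ∑' n : ℤ, ((-1:ℂ)) ^ n * Q ^ (n * (n - 1) / 2) := rfl
  rw [h]
  linear_combination (-1/2 : ℂ) * e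

lemma key_pointwise (m : ℕ) (q x : ℂ) (hq0 : q ≠ 0) (hxq : ∀ n : ℤ, x * q ^ n ≠ 1) (n : ℤ) :
    (-1:ℂ) ^ (n-1) * q ^ ((m : ℤ) * (n-1) * ((n-1) + 1) / 2) / (1 - (x*q) * q ^ (n-1))
    + x ^ m * ((-1:ℂ) ^ n * q ^ ((m : ℤ) * n * (n + 1) / 2) / (1 - x * q ^ n))
    = ∑ k ∈ Finset.range m, -(x ^ k * ((-(q ^ k)) ^ n * (q ^ m) ^ (n * (n - 1) / 2))) := by
  have hden : 1 - x * q ^ n ≠ 0 := sub_ne_zero.mpr (Ne.symm (hxq n))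
  have hq1n : (x*q) * q^(n-1) = x * q^n := by
    rw [mul_assoc, ← zpow_one_add₀ hq0]; norm_num
  have hP : (-1:ℂ)^(n-1) = -((-1:ℂ))^n := by
    have hinv : ((-1:ℂ)^(1:ℤ))⁻¹ = (-1:ℂ) := by norm_num
    rw [zpow_sub₀ (by norm_num : (-1:ℂ) ≠ 0), div_eq_mul_inv, hinv]; ring
  have hq2 : q^((m:ℤ)*(n*(n-1)/2) + (m:ℤ)*n) = q^((m:ℤ)*(n*(n-1)/2)) * (q^n)^m := by
    rw [zpow_add₀ hq0]
    congr 1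
    rw [mul_comm, zpow_mul, zpow_natCast]
  have hsum : ∑ k ∈ Finset.range m, -(x^k * ((-(q^k) : ℂ)^n * (q^m : ℂ)^(n*(n-1)/2)))
      = -(((-1:ℂ))^n * q^((m:ℤ)*(n*(n-1)/2)) * ∑ k ∈ Finset.range m, (x*q^n)^k) := by
    rw [Finset.mul_sum, ← Finset.sum_neg_distrib]
    refine Finset.sum_congr rfl fun k _ => ?_
    have h1 : (-(q^k) : ℂ)^n = (-1:ℂ)^n * (q^n)^k := by
      rw [← neg_one_mul, mul_zpow, pow_swap]
    have h2 : ((q^m : ℂ))^(n*(n-1)/2) = q^((m:ℤ)*(n*(n-1)/2)) := by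
      rw [← zpow_natCast q m, ← zpow_mul]
    rw [h1, h2, mul_pow]; ring
  have hg := geom_sum_mul (x*q^n) m
  rw [hsum, hq1n, expB, expA, hP, hq2, mul_div_assoc', ← add_div, div_eq_iff hden]
  linear_combination (-((-1:ℂ)^n * q^((m:ℤ)*(n*(n-1)/2)))) * hg

/-- Summability of theta-type series. -/
lemma summable_theta (m k : ℕ) (hm : 0 < m) (q : ℂ) (hq0 : q ≠ 0) (hq1 : ‖q‖ < 1) :
    Summable (fun n : ℤ => (-(q^k) : ℂ) ^ n * (q^m : ℂ) ^ (n*(n-1)/2)) := by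
  set r : ℝ := ‖q‖ with hr
  have hr0 : 0 < r := norm_pos_iff.mpr hq0
  have hnorm : ∀ n : ℤ, ‖(-(q^k) : ℂ)^n * (q^m : ℂ)^(n*(n-1)/2)‖
      = r ^ ((k:ℤ)*n + (m:ℤ)*(n*(n-1)/2)) := by
    intro n
    rw [norm_mul, norm_zpow, norm_zpow, norm_neg, norm_pow, norm_pow,
      zpow_add₀ hr0.ne', ← zpow_natCast r k, ← zpow_mul, ← zpow_natCast r m, ← zpow_mul]
  have hm1 : (1:ℤ) ≤ (m:ℤ) := by exact_mod_cast hm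
  refine Summable.of_nat_of_neg ?_ ?_
  · -- positive side: exponent ≥ n - 1
    refine Summable.of_norm_bounded (g := fun n : ℕ => r⁻¹ * r ^ n)
      (((summable_geometric_of_lt_one hr0.le hq1).mul_left r⁻¹)) (fun n => ?_)
    rw [hnorm]
    have hT := T_spec (n:ℤ)
    have hn0 : (0:ℤ) ≤ (n:ℤ) := Int.natCast_nonneg n
    have hT0 : 0 ≤ ((n:ℤ)*((n:ℤ)-1)/2) := by
      rcases Nat.eq_zero_or_pos n with h | h
      · subst h; norm_num
      · have h1 : (1:ℤ) ≤ (n:ℤ) := by exact_mod_cast h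
        nlinarith
    have hT1 : (n:ℤ) - 1 ≤ ((n:ℤ)*((n:ℤ)-1)/2) := by
      rcases le_or_gt (n:ℤ) 1 with h | h
      · nlinarith
      · nlinarith
    have hE : (n:ℤ) - 1 ≤ (k:ℤ)*(n:ℤ) + (m:ℤ)*((n:ℤ)*((n:ℤ)-1)/2) := by
      nlinarith [mul_nonneg (Int.natCast_nonneg k) hn0,
        mul_nonneg (by linarith : (0:ℤ) ≤ (m:ℤ) - 1) hT0]
    calc r ^ ((k:ℤ)*(n:ℤ) + (m:ℤ)*((n:ℤ)*((n:ℤ)-1)/2))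
        ≤ r ^ ((n:ℤ) - 1) := zpow_le_zpow_right_of_le_one₀ hr0 hq1.le hE
      _ = r⁻¹ * r ^ n := by
          rw [zpow_sub₀ hr0.ne', zpow_one, zpow_natCast]; ring
  · -- negative side: exponent ≥ n - (2k+1)^2
    refine Summable.of_norm_bounded (g := fun n : ℕ => r ^ (-((2*(k:ℤ)+1)^2)) * r ^ n)
      (((summable_geometric_of_lt_one hr0.le hq1).mul_left _)) (fun n => ?_)
    rw [hnorm]
    have hT := T_spec (-(n:ℤ))
    have hn0 : (0:ℤ) ≤ (n:ℤ) := Int.natCast_nonneg n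
    have hk0 : (0:ℤ) ≤ (k:ℤ) := Int.natCast_nonneg k
    have hT0 : 0 ≤ ((-(n:ℤ))*((-(n:ℤ))-1)/2) := by nlinarith
    have hE : (n:ℤ) - (2*(k:ℤ)+1)^2 ≤ (k:ℤ)*(-(n:ℤ)) + (m:ℤ)*((-(n:ℤ))*((-(n:ℤ))-1)/2) := by
      nlinarith [sq_nonneg ((n:ℤ) - (2*(k:ℤ)+1)), mul_nonneg hk0 hn0,
        mul_nonneg (by linarith : (0:ℤ) ≤ (m:ℤ) - 1) hT0, sq_nonneg ((k:ℤ))]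
    calc r ^ ((k:ℤ)*(-(n:ℤ)) + (m:ℤ)*((-(n:ℤ))*((-(n:ℤ))-1)/2))
        ≤ r ^ ((n:ℤ) - (2*(k:ℤ)+1)^2) := zpow_le_zpow_right_of_le_one₀ hr0 hq1.le hE
      _ = r ^ (-((2*(k:ℤ)+1)^2)) * r ^ n := by
          rw [sub_eq_add_neg, add_comm, zpow_add₀ hr0.ne', zpow_natCast]

lemma summable_appell (m : ℕ) (hm : 0 < m) (q x : ℂ) (hq0 : q ≠ 0) (hq1 : ‖q‖ < 1)
    (hx : x ≠ 0) (hxq : ∀ n : ℤ, x * q ^ n ≠ 1) :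
    Summable (fun n : ℤ => (-1:ℂ) ^ n * q ^ ((m : ℤ) * n * (n + 1) / 2) / (1 - x * q ^ n)) := by
  set r : ℝ := ‖q‖ with hr
  have hr0 : 0 < r := norm_pos_iff.mpr hq0
  have hm1 : (1:ℤ) ≤ (m:ℤ) := by exact_mod_cast hm
  have hnum : ∀ n : ℤ, ‖(-1:ℂ) ^ n * q ^ ((m : ℤ) * n * (n + 1) / 2)‖
      = r ^ ((m : ℤ) * n * (n + 1) / 2) := by
    intro n
    rw [norm_mul, norm_zpow, norm_zpow, norm_neg, norm_one, one_zpow, one_mul]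
  refine Summable.of_nat_of_neg ?_ ?_
  · -- positive side
    refine Summable.of_norm_bounded_eventually (g := fun n : ℕ => 2 * r ^ n)
      ((summable_geometric_of_lt_one hr0.le hq1).mul_left 2) ?_
    rw [Nat.cofinite_eq_atTop]
    have hev : ∀ᶠ n : ℕ in atTop, ‖x‖ * r ^ n < 1/2 := by
      have ht : Tendsto (fun n : ℕ => ‖x‖ * r ^ n) atTop (nhds 0) := by
        simpa using (tendsto_pow_atTop_nhds_zero_of_lt_one hr0.le hq1).const_mul ‖x‖
      exact ht.eventually_lt_const (by norm_num)
    filter_upwards [hev] with n hn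
    have hw : ‖x * q ^ ((n:ℕ):ℤ)‖ = ‖x‖ * r ^ n := by
      rw [norm_mul, norm_zpow, zpow_natCast]
    have hden : (1:ℝ)/2 ≤ ‖1 - x * q ^ ((n:ℕ):ℤ)‖ := by
      have h1 := norm_sub_norm_le (1 : ℂ) (x * q ^ ((n:ℕ):ℤ))
      rw [norm_one, hw] at h1
      linarith
    have hE : (n:ℤ) ≤ (m:ℤ) * (n:ℤ) * ((n:ℤ)+1) / 2 := by
      have hT := T_spec ((n:ℤ)+1)
      have h2 : (m:ℤ) * (n:ℤ) * ((n:ℤ)+1) = 2 * ((m:ℤ) * (((n:ℤ)+1)*((n:ℤ)+1-1)/2)) := by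
        linear_combination -(m:ℤ) * hT
      rw [h2, Int.mul_ediv_cancel_left _ (by norm_num : (2:ℤ) ≠ 0)]
      have hn0 : (0:ℤ) ≤ (n:ℤ) := Int.natCast_nonneg n
      have hT0 : 0 ≤ (((n:ℤ)+1)*((n:ℤ)+1-1)/2) := by nlinarith
      have hT1 : (n:ℤ) ≤ (((n:ℤ)+1)*((n:ℤ)+1-1)/2) := by nlinarith
      nlinarith [mul_nonneg (by linarith : (0:ℤ) ≤ (m:ℤ) - 1) hT0]
    rw [norm_div, hnum]
    calc r ^ ((m:ℤ) * (n:ℤ) * ((n:ℤ)+1) / 2) / ‖1 - x * q ^ ((n:ℕ):ℤ)‖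
        ≤ r ^ ((n:ℤ)) / (1/2) := by
          refine div_le_div₀ (by positivity) ?_ (by norm_num) hden
          exact zpow_le_zpow_right_of_le_one₀ hr0 hq1.le hE
      _ = 2 * r ^ n := by rw [zpow_natCast]; ring
  · -- negative side
    refine Summable.of_norm_bounded_eventually (g := fun n : ℕ => (2/‖x‖) * r ^ n)
      ((summable_geometric_of_lt_one hr0.le hq1).mul_left _) ?_
    rw [Nat.cofinite_eq_atTop]
    have hx0 : 0 < ‖x‖ := norm_pos_iff.mpr hx
    have hev : ∀ᶠ n : ℕ in atTop, r ^ n < ‖x‖/2 := by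
      exact (tendsto_pow_atTop_nhds_zero_of_lt_one hr0.le hq1).eventually_lt_const
        (by positivity)
    filter_upwards [hev] with n hn
    have hrn : 0 < r ^ n := by positivity
    have hw : ‖x * q ^ (-(n:ℤ))‖ = ‖x‖ * (r ^ n)⁻¹ := by
      rw [norm_mul, norm_zpow, zpow_neg, zpow_natCast]
    have h2le : 2 ≤ ‖x‖ * (r ^ n)⁻¹ := by
      rw [← div_eq_mul_inv, le_div_iff₀ hrn]
      linarith
    have hden : ‖x‖ * (r ^ n)⁻¹ / 2 ≤ ‖1 - x * q ^ (-(n:ℤ))‖ := by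
      have h1 := norm_sub_norm_le (x * q ^ (-(n:ℤ))) (1 : ℂ)
      rw [norm_one, hw] at h1
      rw [norm_sub_rev] at h1
      linarith
    have hdenpos : 0 < ‖x‖ * (r ^ n)⁻¹ / 2 := by positivity
    have hE : (0:ℤ) ≤ (m:ℤ) * (-(n:ℤ)) * ((-(n:ℤ))+1) / 2 := by
      have hT := T_spec ((-(n:ℤ))+1)
      have h2 : (m:ℤ) * (-(n:ℤ)) * ((-(n:ℤ))+1)
          = 2 * ((m:ℤ) * (((-(n:ℤ))+1)*(((-(n:ℤ))+1)-1)/2)) := by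
        linear_combination -(m:ℤ) * hT
      rw [h2, Int.mul_ediv_cancel_left _ (by norm_num : (2:ℤ) ≠ 0)]
      have hn0 : (0:ℤ) ≤ (n:ℤ) := Int.natCast_nonneg n
      have hprod : (0:ℤ) ≤ ((-(n:ℤ))+1)*(((-(n:ℤ))+1)-1) := by
        rcases Nat.eq_zero_or_pos n with h | h
        · subst h; norm_num
        · have h1 : (1:ℤ) ≤ (n:ℤ) := by exact_mod_cast h
          nlinarith
      have hT0 : 0 ≤ ((((-(n:ℤ))+1))*(((-(n:ℤ))+1)-1)/2) := by linarith
      nlinarith [mul_nonneg (by linarith : (0:ℤ) ≤ (m:ℤ) - 1) hT0]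
    rw [norm_div, hnum]
    calc r ^ ((m:ℤ) * (-(n:ℤ)) * ((-(n:ℤ))+1) / 2) / ‖1 - x * q ^ (-(n:ℤ))‖
        ≤ 1 / (‖x‖ * (r ^ n)⁻¹ / 2) := by
          refine div_le_div₀ (by norm_num) ?_ hdenpos hden
          calc r ^ ((m:ℤ) * (-(n:ℤ)) * ((-(n:ℤ))+1) / 2) ≤ r ^ (0:ℤ) :=
                zpow_le_zpow_right_of_le_one₀ hr0 hq1.le hE
            _ = 1 := zpow_zero r
      _ = (2/‖x‖) * r ^ n := by field_simp

set_option maxHeartbeats 1000000 in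
/-- Pseudo-periodicity of `G_m(x,1)`:
`G_m(xq, 1) + x^m G_m(x, 1) + ∑_{k=1}^{m-1} x^k θ_{q^m}(-q^k) = 0`
(the `k = 0` theta term drops out since `θ_{q^m}(-1) = 0`). -/
theorem appellG1_pseudo_periodicity (m : ℕ) (hm : 0 < m) (q x : ℂ)
    (hq0 : q ≠ 0) (hq1 : ‖q‖ < 1) (hx : x ≠ 0)
    (hxq : ∀ n : ℤ, x * q ^ n ≠ 1) :
    appellG1 m q (x * q) + x ^ m * appellG1 m q x
      + ∑ k ∈ Finset.Ico 1 m, x ^ k * thetaQ (q ^ m) (-(q ^ k)) = 0 := by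
  have hq1' : ‖q‖ < 1 := hq1
  set a : ℤ → ℂ := fun n => (-1:ℂ)^n * q^((m:ℤ)*n*(n+1)/2) / (1 - (x*q)*q^n) with ha
  set b : ℤ → ℂ := fun n => (-1:ℂ)^n * q^((m:ℤ)*n*(n+1)/2) / (1 - x*q^n) with hb
  have hxq' : ∀ n : ℤ, (x*q) * q^n ≠ 1 := by
    intro n
    rw [mul_assoc, ← zpow_one_add₀ hq0]
    exact hxq (1+n)
  have hsa : Summable a := summable_appell m hm q (x*q) hq0 hq1' (mul_ne_zero hx hq0) hxq'
  have hsb : Summable b := summable_appell m hm q x hq0 hq1' hx hxq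
  have hsa' : Summable (fun n : ℤ => a (n-1)) :=
    (Equiv.subRight (1:ℤ)).summable_iff.mpr hsa
  have hsb' : Summable (fun n : ℤ => x^m * b n) := hsb.mul_left _
  have hgsum : ∀ k ∈ Finset.range m, Summable (fun n : ℤ =>
      -(x^k * ((-(q^k) : ℂ)^n * (q^m : ℂ)^(n*(n-1)/2)))) := by
    intro k _
    exact ((summable_theta m k hm q hq0 hq1').mul_left (x^k)).neg
  have e1 : appellG1 m q (x*q) = ∑' n : ℤ, a (n-1) := by
    have h := (Equiv.subRight (1:ℤ)).tsum_eq a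
    simp only [Equiv.subRight_apply] at h
    have e0 : appellG1 m q (x*q) = ∑' n : ℤ, a n := by simp only [appellG1, ha]
    rw [e0, ← h]
  have e2 : x^m * appellG1 m q x = ∑' n : ℤ, x^m * b n := (tsum_mul_left).symm
  rw [e1, e2, ← Summable.tsum_add hsa' hsb']
  have e3 : ∀ n : ℤ, a (n-1) + x^m * b n
      = ∑ k ∈ Finset.range m, -(x^k * ((-(q^k) : ℂ)^n * (q^m : ℂ)^(n*(n-1)/2))) :=
    fun n => key_pointwise m q x hq0 hxq n
  rw [tsum_congr e3, Summable.tsum_finsetSum hgsum]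
  have e4 : ∀ k : ℕ, ∑' n : ℤ, -(x^k * ((-(q^k) : ℂ)^n * (q^m : ℂ)^(n*(n-1)/2)))
      = -(x^k * thetaQ (q^m) (-(q^k))) := by
    intro k
    rw [tsum_neg, tsum_mul_left]
    rfl
  rw [Finset.sum_congr rfl (fun k _ => e4 k), Finset.sum_neg_distrib,
    Finset.range_eq_Ico, Finset.sum_eq_sum_Ico_succ_bot hm]
  simp [thetaQ_neg_one]
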